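/- arXiv:2111.02965 — 2 statements merged into one kernel-verified Lean document; each statement's English description precedes it below -/
import Mathlib

section
/- Let R be a commutative unital ring, and let (a,b,c) be a unimodular row of length 3 over R. Then (a,b,c) is stable (i.e., there exist λ, μ ∈ R such that (a+λc, b+μc) is unimodular) if and only if every matrix in SL₂(R/Rc) whose first row is (ā, b̄) lifts to a matrix in SL₂(R), where ā, b̄ denote the images of a, b in R/Rc. -/
/-!
If `(a + l c, b + m c)` is unimodular, it lifts the first row of any `M ∈ SL₂(R/Rc)`, and the
second row can then be corrected modulo `c`. Conversely, `(ā, b̄)` is unimodular in `R/Rc`, so it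
is the first row of some matrix in `SL₂(R/Rc)`; the first row of a lift of that matrix is
unimodular and congruent to `(a, b)` modulo `c`.
-/

open Ideal Matrix

theorem Ideal.span_pair_eq_top_iff_isCoprime {R : Type*} [CommSemiring R] (x y : R) :
    span {x, y} = ⊤ ↔ IsCoprime x y := by
  rw [span_insert, sup_eq_top_iff_isCoprime]

theorem Ideal.isCoprime_mk_span_singleton_of_span_triple_eq_top {R : Type*} [CommRing R]
    {a b c : R} (h : span {a, b, c} = ⊤) :
    IsCoprime (Ideal.Quotient.mk (span {c}) a) (Ideal.Quotient.mk (span {c}) b) := by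
  have hmap := congrArg (Ideal.map (Ideal.Quotient.mk (span {c}))) h
  rw [map_span, map_top, Set.image_insert_eq, Set.image_pair,
    Quotient.eq_zero_iff_mem.mpr (mem_span_singleton_self c)] at hmap
  rw [← span_pair_eq_top_iff_isCoprime, ← hmap]
  simp [span_insert]

theorem Ideal.exists_eq_add_mul_of_mk_span_singleton_eq {R : Type*} [CommRing R] {c x y : R}
    (h : Ideal.Quotient.mk (span {c}) x = Ideal.Quotient.mk (span {c}) y) :
    ∃ l, x = y + l * c := by
  obtain ⟨l, hl⟩ := mem_span_singleton'.mp ((Quotient.mk_eq_mk_iff_sub_mem x y).mp h)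
  exact ⟨l, by rw [hl, add_sub_cancel]⟩

/-- If `p a + q b = 1` and `a y - b x = 1 + t` for a lift `(x, y)` of the second row, then
`t ∈ I`, and subtracting `t • (-q, p)` from `(x, y)` brings the determinant to `1`. -/
theorem Matrix.exists_det_eq_one_lift_of_isCoprime {R : Type*} [CommRing R] {I : Ideal R}
    {M : Matrix (Fin 2) (Fin 2) (R ⧸ I)} (hM : M.det = 1) {a b : R} (hab : IsCoprime a b)
    (ha : M 0 0 = Ideal.Quotient.mk I a) (hb : M 0 1 = Ideal.Quotient.mk I b) :
    ∃ N : Matrix (Fin 2) (Fin 2) R, N.det = 1 ∧ ∀ i j, Ideal.Quotient.mk I (N i j) = M i j := by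
  obtain ⟨p, q, hpq⟩ := hab
  obtain ⟨x, hx⟩ := Ideal.Quotient.mk_surjective (M 1 0)
  obtain ⟨y, hy⟩ := Ideal.Quotient.mk_surjective (M 1 1)
  set t := a * y - b * x - 1 with ht
  have ht_zero : Ideal.Quotient.mk I t = 0 := by
    rw [ht, map_sub, map_sub, map_mul, map_mul, ← ha, ← hb, hx, hy, ← det_fin_two, hM, map_one,
      sub_self]
  refine ⟨!![a, b; x + t * q, y - t * p], ?_, ?_⟩
  · rw [det_fin_two_of]
    linear_combination ht - t * hpq
  · intro i j
    fin_cases i <;> fin_cases j <;> simp [ha, hb, hx, hy, ht_zero]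

theorem stmt4 {R : Type*} [CommRing R] (a b c : R)
    (h : Ideal.span {a, b, c} = ⊤) :
    (∃ l m : R, Ideal.span {a + l * c, b + m * c} = ⊤) ↔
      ∀ M : Matrix (Fin 2) (Fin 2) (R ⧸ Ideal.span {c}),
        M.det = 1 →
        M 0 0 = Ideal.Quotient.mk (Ideal.span {c}) a →
        M 0 1 = Ideal.Quotient.mk (Ideal.span {c}) b →
        ∃ N : Matrix (Fin 2) (Fin 2) R, N.det = 1 ∧
          ∀ i j, Ideal.Quotient.mk (Ideal.span {c}) (N i j) = M i j := by
  have hc : Ideal.Quotient.mk (span {c}) c = 0 :=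
    Quotient.eq_zero_iff_mem.mpr (mem_span_singleton_self c)
  constructor
  · rintro ⟨l, m, hlm⟩ M hM ha hb
    exact exists_det_eq_one_lift_of_isCoprime hM ((span_pair_eq_top_iff_isCoprime _ _).mp hlm)
      (by simp [ha, hc]) (by simp [hb, hc])
  · intro hlift
    obtain ⟨g, hga, hgb⟩ := (isCoprime_mk_span_singleton_of_span_triple_eq_top h).exists_SL2_row 0
    obtain ⟨N, hN, hNg⟩ := hlift g g.det_coe hga hgb
    obtain ⟨l, hl⟩ := exists_eq_add_mul_of_mk_span_singleton_eq ((hNg 0 0).trans hga)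
    obtain ⟨m, hm⟩ := exists_eq_add_mul_of_mk_span_singleton_eq ((hNg 0 1).trans hgb)
    refine ⟨l, m, ?_⟩
    rw [← hl, ← hm, span_pair_eq_top_iff_isCoprime]
    exact SpecialLinearGroup.isCoprime_row ⟨N, hN⟩ 0
end

section
/- Let R be a commutative unital ring such that every proper quotient of R/Jac(R) has stable rank 1. Then sr(R) ≤ 2. -/
/-!
Let `J` be the Jacobson radical. Unimodularity of a pair can be tested modulo `J`, since an
element that is `1` modulo `J` is a unit; so it suffices to shorten unimodular triples over
`R ⧸ J`. Given a unimodular triple `(a, b, c)` there with `b ≠ 0`, the pair `(a, c)` is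
unimodular modulo `(b)`, a proper quotient, hence `a + l c` is a unit modulo `(b)` for some `l`,
which makes `(a + l c, b)` unimodular. If `b = 0`, the pair `(a, b + c) = (a, c)` is already unimodular.
-/

open Ideal

def HasStableRankOne (R : Type*) [CommRing R] : Prop :=
  ∀ a b : R, span {a, b} = ⊤ → ∃ s, IsUnit (a + s * b)

def HasStableRankLeTwo (R : Type*) [CommRing R] : Prop :=
  ∀ a b c : R, span {a, b, c} = ⊤ → ∃ l m : R, span {a + l * c, b + m * c} = ⊤

namespace Ideal

variable {R : Type*} [CommRing R]

theorem eq_top_of_map_mk_eq_top {I K : Ideal R} (hI : I ≤ (⊥ : Ideal R).jacobson)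
    (hK : K.map (Quotient.mk I) = ⊤) : K = ⊤ := by
  obtain ⟨x, hxK, hx⟩ :=
    (mem_map_iff_of_surjective _ Quotient.mk_surjective).mp (hK ▸ Submodule.mem_top (x := 1))
  have hx1 : x - 1 ∈ I := Quotient.eq.mp (hx.trans (map_one _).symm)
  exact eq_top_of_isUnit_mem K hxK (isUnit_of_sub_one_mem_jacobson_bot x (hI hx1))

theorem span_singleton_sup_eq_top_of_isUnit_mk {I : Ideal R} {x : R}
    (hx : IsUnit (Quotient.mk I x)) : span {x} ⊔ I = ⊤ := by
  obtain ⟨t, ht⟩ := hx.exists_right_inv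
  obtain ⟨t, rfl⟩ := Quotient.mk_surjective t
  have hxt : x * t - 1 ∈ I := Quotient.eq.mp (by rw [map_mul, ht, map_one])
  rw [eq_top_iff_one]
  have hmem : x * t ∈ span {x} ⊔ I := mem_sup_left (mul_mem_right t _ (mem_span_singleton_self x))
  simpa using sub_mem hmem (mem_sup_right hxt)

theorem span_pair_mk_eq_top_of_span_triple_eq_top {I : Ideal R} {a b c : R}
    (habc : span {a, b, c} = ⊤) (hb : b ∈ I) :
    span {Quotient.mk I a, Quotient.mk I c} = ⊤ := by
  have := congrArg (map (Quotient.mk I)) habc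
  rw [map_span, map_top] at this
  simpa [Set.image_insert_eq, Quotient.eq_zero_iff_mem.mpr hb, Set.insert_comm] using this

end Ideal

section

variable {R : Type*} [CommRing R]

theorem HasStableRankLeTwo.of_quotient {I : Ideal R} (hI : I ≤ (⊥ : Ideal R).jacobson)
    (h : HasStableRankLeTwo (R ⧸ I)) : HasStableRankLeTwo R := by
  intro a b c habc
  have hmk : span {Ideal.Quotient.mk I a, Ideal.Quotient.mk I b, Ideal.Quotient.mk I c} = ⊤ := by
    have := congrArg (map (Ideal.Quotient.mk I)) habc
    rwa [map_span, Ideal.map_top, Set.image_insert_eq, Set.image_pair] at this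
  obtain ⟨l, m, hlm⟩ := h _ _ _ hmk
  obtain ⟨l, rfl⟩ := Ideal.Quotient.mk_surjective l
  obtain ⟨m, rfl⟩ := Ideal.Quotient.mk_surjective m
  refine ⟨l, m, eq_top_of_map_mk_eq_top hI ?_⟩
  simpa [map_span, Set.image_insert_eq] using hlm

theorem hasStableRankLeTwo_of_forall_quotient
    (h : ∀ I : Ideal R, I ≠ ⊥ → HasStableRankOne (R ⧸ I)) : HasStableRankLeTwo R := by
  intro a b c habc
  by_cases hb : b = 0
  · subst hb
    rw [Set.insert_comm, span_insert_zero] at habc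
    exact ⟨0, 1, by simpa using habc⟩
  · have hI : span {b} ≠ ⊥ := by simpa [span_singleton_eq_bot] using hb
    obtain ⟨s, hs⟩ := h _ hI _ _ (span_pair_mk_eq_top_of_span_triple_eq_top habc
      (mem_span_singleton_self b))
    obtain ⟨l, rfl⟩ := Ideal.Quotient.mk_surjective s
    refine ⟨l, 0, ?_⟩
    rw [zero_mul, add_zero, span_insert]
    exact span_singleton_sup_eq_top_of_isUnit_mk (by simpa using hs)

end

theorem stmt9 {R : Type*} [CommRing R]
    (h : ∀ I : Ideal (R ⧸ (⊥ : Ideal R).jacobson), I ≠ ⊥ →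
      ∀ a b : (R ⧸ (⊥ : Ideal R).jacobson) ⧸ I, Ideal.span {a, b} = ⊤ →
        ∃ s, IsUnit (a + s * b)) :
    ∀ a b c : R, Ideal.span {a, b, c} = ⊤ →
      ∃ l m : R, Ideal.span {a + l * c, b + m * c} = ⊤ :=
  HasStableRankLeTwo.of_quotient le_rfl (hasStableRankLeTwo_of_forall_quotient h)
end
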